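/- arXiv:2306.06660 — 2 statements merged into one kernel-verified Lean document; each statement's English description precedes it below -/
import Mathlib

section
/- For every z ∈ ℂ, with y = e^{2πiz}, the function φ_{0,1}(it, z)³ tends to y⁻³ + 30y⁻² + 303y⁻¹ + 1060 + 303y + 30y² + y³ as the real parameter t tends to +∞. -/
open Complex Filter Topology

/-- The Jacobi theta function θ₁. -/
noncomputable def theta1 (τ z : ℂ) : ℂ :=
  -Complex.I * ∑' n : ℤ, (-1 : ℂ) ^ n *
    Complex.exp (Real.pi * Complex.I * ((n : ℂ) + 1 / 2) ^ 2 * τ) *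
    Complex.exp (2 * Real.pi * Complex.I * ((n : ℂ) + 1 / 2) * z)

/-- The Jacobi theta function θ₂. -/
noncomputable def theta2 (τ z : ℂ) : ℂ :=
  ∑' n : ℤ, Complex.exp (Real.pi * Complex.I * ((n : ℂ) + 1 / 2) ^ 2 * τ) *
    Complex.exp (2 * Real.pi * Complex.I * ((n : ℂ) + 1 / 2) * z)

/-- The Jacobi theta function θ₃. -/
noncomputable def theta3 (τ z : ℂ) : ℂ :=
  ∑' n : ℤ, Complex.exp (Real.pi * Complex.I * (n : ℂ) ^ 2 * τ) *
    Complex.exp (2 * Real.pi * Complex.I * (n : ℂ) * z)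

/-- The Jacobi theta function θ₄. -/
noncomputable def theta4 (τ z : ℂ) : ℂ :=
  ∑' n : ℤ, (-1 : ℂ) ^ n * Complex.exp (Real.pi * Complex.I * (n : ℂ) ^ 2 * τ) *
    Complex.exp (2 * Real.pi * Complex.I * (n : ℂ) * z)

/-- The Dedekind eta function. -/
noncomputable def dedekindEta (τ : ℂ) : ℂ :=
  Complex.exp (Real.pi * Complex.I * τ / 12) *
    ∏' n : ℕ, (1 - Complex.exp (2 * Real.pi * Complex.I * ((n : ℂ) + 1) * τ))

/-- The weak Jacobi form φ_{0,1}. -/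
noncomputable def phi01 (τ z : ℂ) : ℂ :=
  4 * ((theta2 τ z / theta2 τ 0) ^ 2 + (theta3 τ z / theta3 τ 0) ^ 2 +
    (theta4 τ z / theta4 τ 0) ^ 2)

/-- The weak Jacobi form φ_{-2,1}. -/
noncomputable def phim21 (τ z : ℂ) : ℂ := -theta1 τ z ^ 2 / dedekindEta τ ^ 6

/-- The normalized Eisenstein series E₄. -/
noncomputable def E4 (τ : ℂ) : ℂ :=
  1 + 240 * ∑' n : ℕ, (∑ d ∈ (n + 1).divisors, (d : ℂ) ^ 3) *
    Complex.exp (2 * Real.pi * Complex.I * ((n : ℂ) + 1) * τ)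

/-- The normalized Eisenstein series E₆. -/
noncomputable def E6 (τ : ℂ) : ℂ :=
  1 - 504 * ∑' n : ℕ, (∑ d ∈ (n + 1).divisors, (d : ℂ) ^ 5) *
    Complex.exp (2 * Real.pi * Complex.I * ((n : ℂ) + 1) * τ)

/-- `IsWeakJacobiForm k M φ` means that `φ : ℂ → ℂ → ℂ` (viewed as a function of
`(τ, z)` on the domain `{τ : 0 < Im τ} × ℂ`) is a weak Jacobi form of weight `k`
and index `M / 2` (so `M` is twice the index, which is allowed to be half-integral):
it is holomorphic, satisfies the modular and elliptic transformation laws, and has a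
Fourier expansion `∑_{n ≥ 0} ∑_{r ∈ ℤ + M/2} c n r q^n y^r` with only
nonnegative powers of `q`. -/
def IsWeakJacobiForm (k M : ℤ) (φ : ℂ → ℂ → ℂ) : Prop :=
  DifferentiableOn ℂ (fun p : ℂ × ℂ => φ p.1 p.2) {p : ℂ × ℂ | 0 < p.1.im} ∧
  (∀ γ : Matrix.SpecialLinearGroup (Fin 2) ℤ, ∀ τ z : ℂ, 0 < τ.im →
    φ ((γ 0 0 * τ + γ 0 1) / (γ 1 0 * τ + γ 1 1)) (z / (γ 1 0 * τ + γ 1 1)) =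
      (γ 1 0 * τ + γ 1 1) ^ k *
        Complex.exp (Real.pi * Complex.I * M * (γ 1 0) * z ^ 2 / (γ 1 0 * τ + γ 1 1)) *
        φ τ z) ∧
  (∀ l μ : ℤ, ∀ τ z : ℂ, 0 < τ.im →
    φ τ (z + l * τ + μ) =
      (-1 : ℂ) ^ (M * (l + μ)) *
        Complex.exp (-(Real.pi * Complex.I * M) * ((l : ℂ) ^ 2 * τ + 2 * l * z)) * φ τ z) ∧
  (∃ c : ℕ → ℤ → ℂ, ∀ τ z : ℂ, 0 < τ.im →
    HasSum (fun p : ℕ × ℤ => c p.1 p.2 * Complex.exp (2 * Real.pi * Complex.I * (p.1 : ℂ) * τ) *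
      Complex.exp (Real.pi * Complex.I * (2 * (p.2 : ℂ) + M) * z)) (φ τ z))

/-- `IsModularForm k f` means that `f : ℂ → ℂ` (viewed as a function on the upper half
plane `{τ : 0 < Im τ}`) is a modular form of weight `k` for `SL₂(ℤ)`: it is holomorphic,
satisfies the modular transformation law, and is bounded as `Im τ → ∞`. -/
def IsModularForm (k : ℤ) (f : ℂ → ℂ) : Prop :=
  DifferentiableOn ℂ f {τ : ℂ | 0 < τ.im} ∧
  (∀ γ : Matrix.SpecialLinearGroup (Fin 2) ℤ, ∀ τ : ℂ, 0 < τ.im →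
    f ((γ 0 0 * τ + γ 0 1) / (γ 1 0 * τ + γ 1 1)) = (γ 1 0 * τ + γ 1 1) ^ k * f τ) ∧
  (∃ A C : ℝ, ∀ τ : ℂ, C ≤ τ.im → ‖f τ‖ ≤ A)

/-! At `τ = it` every theta series becomes `∑ cₙ e^{-π mₙ t}` with `mₙ ≥ 0`; the series at
`t = 1` dominates it for `t ≥ 1`, so by Tannery's theorem only the terms with `mₙ = 0` survive
as `t → ∞`. Thus `θ₃, θ₄ → 1`, while `θ₂(it, z) / θ₂(it, 0) → cos πz` because the two leading
terms `n = 0, -1` of `θ₂` have equal size. Hence `φ_{0,1}(it, z) → y + 10 + y⁻¹`, and the cube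
of this Laurent polynomial is the claimed one. -/

open scoped Real

theorem tendsto_tsum_mul_exp_neg_mul_atTop {ι : Type*} (c : ι → ℂ) {a : ι → ℝ}
    (ha : ∀ n, 0 ≤ a n) (hc : Summable fun n => ‖c n‖ * rexp (-a n)) {L : ℂ}
    (hL : HasSum (fun n => if a n = 0 then c n else 0) L) :
    Tendsto (fun t : ℝ => ∑' n, c n * rexp (-(a n * t))) atTop (𝓝 L) := by
  rw [← hL.tsum_eq]
  refine tendsto_tsum_of_dominated_convergence hc (fun n => ?_) ?_
  · split_ifs with h
    · simp [h]
    · have hexp : Tendsto (fun t => rexp (-(a n * t))) atTop (𝓝 0) :=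
        Real.tendsto_exp_neg_atTop_nhds_zero.comp
          (tendsto_id.const_mul_atTop ((ha n).lt_of_ne' h))
      simpa using ((continuous_ofReal.tendsto 0).comp hexp).const_mul (c n)
  · filter_upwards [eventually_ge_atTop 1] with t ht n
    rw [norm_mul, norm_real, Real.norm_of_nonneg (Real.exp_pos _).le]
    gcongr
    nlinarith [ha n]

theorem jacobiTheta₂_term_add_mul_I (n : ℤ) (z : ℂ) (c t : ℝ) :
    jacobiTheta₂_term n (z + c * t * I) (t * I) =
      cexp (2 * π * I * n * z) * rexp (-(π * (n ^ 2 + 2 * c * n) * t)) := by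
  rw [jacobiTheta₂_term, ofReal_exp, ← Complex.exp_add]
  congr 1
  push_cast
  linear_combination (π * n * t * (n + 2 * c) : ℂ) * I_sq

theorem tendsto_jacobiTheta₂_add_mul_I (z : ℂ) {c : ℝ} (hc : ∀ n : ℤ, 0 ≤ n ^ 2 + 2 * c * n)
    {L : ℂ} (hL : HasSum (fun n : ℤ => if n ^ 2 + 2 * c * n = 0 then
      cexp (2 * π * I * n * z) else 0) L) :
    Tendsto (fun t : ℝ => jacobiTheta₂ (z + c * t * I) (t * I)) atTop (𝓝 L) := by
  have hsum : Summable fun n : ℤ =>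
      ‖cexp (2 * π * I * n * z)‖ * rexp (-(π * (n ^ 2 + 2 * c * n))) := by
    refine ((summable_jacobiTheta₂_term_iff (z + c * (1 : ℝ) * I) ((1 : ℝ) * I)).mpr
      (by simp)).norm.congr fun n => ?_
    rw [jacobiTheta₂_term_add_mul_I, norm_mul, norm_real, mul_one,
      Real.norm_of_nonneg (Real.exp_pos _).le]
  have hL' : HasSum (fun n : ℤ => if π * (n ^ 2 + 2 * c * n) = 0 then
      cexp (2 * π * I * n * z) else 0) L := by
    simpa [Real.pi_ne_zero] using hL
  convert tendsto_tsum_mul_exp_neg_mul_atTop _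
    (fun n => mul_nonneg Real.pi_pos.le (hc n)) hsum hL' using 2 with t
  exact tsum_congr fun n => jacobiTheta₂_term_add_mul_I n z c t

theorem tendsto_jacobiTheta₂_mul_I (z : ℂ) :
    Tendsto (fun t : ℝ => jacobiTheta₂ z (t * I)) atTop (𝓝 1) := by
  have hL : HasSum (fun n : ℤ => if (n : ℝ) ^ 2 + 2 * 0 * n = 0 then
      cexp (2 * π * I * n * z) else 0) 1 := by
    convert hasSum_ite_eq (0 : ℤ) (1 : ℂ) using 2 with n
    by_cases hn : n = 0 <;> simp [hn]
  simpa using tendsto_jacobiTheta₂_add_mul_I z (fun n => by simpa using sq_nonneg (n : ℝ)) hL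

theorem tendsto_jacobiTheta₂_add_half_mul_I (z : ℂ) :
    Tendsto (fun t : ℝ => jacobiTheta₂ (z + t * I / 2) (t * I)) atTop
      (𝓝 (1 + cexp (-(2 * π * I * z)))) := by
  have hc (n : ℤ) : (0 : ℝ) ≤ n ^ 2 + 2 * (1 / 2) * n := by
    have : (0 : ℝ) ≤ n * (n + 1) := by
      rcases le_or_gt 0 n with h | h
      · positivity
      · have : (n : ℝ) ≤ -1 := by exact_mod_cast Int.le_sub_one_of_lt h
        nlinarith
    linarith
  have hL : HasSum (fun n : ℤ => if (n : ℝ) ^ 2 + 2 * (1 / 2) * n = 0 then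
      cexp (2 * π * I * n * z) else 0) (1 + cexp (-(2 * π * I * z))) := by
    convert (hasSum_ite_eq (0 : ℤ) (1 : ℂ)).add (hasSum_ite_eq (-1 : ℤ) _) using 1
    ext n
    rcases eq_or_ne n 0 with rfl | h0
    · simp
    rcases eq_or_ne n (-1) with rfl | h1
    · simp
    have hn : (n : ℝ) ^ 2 + n ≠ 0 := by
      have : (n : ℝ) * (n + 1) ≠ 0 :=
        mul_ne_zero (by exact_mod_cast h0) (by exact_mod_cast (by omega : n + 1 ≠ 0))
      contrapose! this
      linarith
    simp [hn, h0, h1]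
  convert tendsto_jacobiTheta₂_add_mul_I z hc hL using 3 with t
  push_cast
  ring

theorem theta3_eq_jacobiTheta₂ (τ z : ℂ) : theta3 τ z = jacobiTheta₂ z τ :=
  tsum_congr fun n => by rw [jacobiTheta₂_term, ← Complex.exp_add]; ring_nf

theorem theta4_eq_jacobiTheta₂ (τ z : ℂ) : theta4 τ z = jacobiTheta₂ (z + 1 / 2) τ := by
  refine tsum_congr fun n => ?_
  rw [jacobiTheta₂_term, show 2 * π * I * n * (z + 1 / 2) + π * I * n ^ 2 * τ =
    n * (π * I) + (π * I * n ^ 2 * τ + 2 * π * I * n * z) by ring, Complex.exp_add,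
    exp_int_mul, exp_pi_mul_I, Complex.exp_add]
  ring

theorem theta2_eq_jacobiTheta₂ (τ z : ℂ) :
    theta2 τ z = cexp (π * I * τ / 4 + π * I * z) * jacobiTheta₂ (z + τ / 2) τ := by
  rw [jacobiTheta₂, ← tsum_mul_left]
  refine tsum_congr fun n => ?_
  rw [jacobiTheta₂_term, ← Complex.exp_add, ← Complex.exp_add]
  ring_nf

theorem tendsto_theta3_mul_I (z : ℂ) :
    Tendsto (fun t : ℝ => theta3 (t * I) z) atTop (𝓝 1) := by
  simpa only [theta3_eq_jacobiTheta₂] using tendsto_jacobiTheta₂_mul_I z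

theorem tendsto_theta4_mul_I (z : ℂ) :
    Tendsto (fun t : ℝ => theta4 (t * I) z) atTop (𝓝 1) := by
  simpa only [theta4_eq_jacobiTheta₂] using tendsto_jacobiTheta₂_mul_I (z + 1 / 2)

theorem tendsto_theta2_div_theta2_zero_mul_I (z : ℂ) :
    Tendsto (fun t : ℝ => theta2 (t * I) z / theta2 (t * I) 0) atTop
      (𝓝 (cexp (π * I * z) * (1 + cexp (-(2 * π * I * z))) / 2)) := by
  have hzero := tendsto_jacobiTheta₂_add_half_mul_I 0
  rw [mul_zero, neg_zero, Complex.exp_zero, one_add_one_eq_two] at hzero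
  refine ((tendsto_jacobiTheta₂_add_half_mul_I z).const_mul _).div hzero two_ne_zero
    |>.congr fun t => ?_
  rw [Pi.div_apply, theta2_eq_jacobiTheta₂, theta2_eq_jacobiTheta₂, mul_zero, add_zero,
    Complex.exp_add, mul_assoc (cexp _), mul_div_mul_left _ _ (Complex.exp_ne_zero _)]

theorem tendsto_phi01_mul_I (z : ℂ) :
    Tendsto (fun t : ℝ => phi01 (t * I) z) atTop
      (𝓝 (cexp (2 * π * I * z) + 10 + (cexp (2 * π * I * z))⁻¹)) := by
  have h2 := tendsto_theta2_div_theta2_zero_mul_I z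
  have h3 := (tendsto_theta3_mul_I z).div (tendsto_theta3_mul_I 0) one_ne_zero
  have h4 := (tendsto_theta4_mul_I z).div (tendsto_theta4_mul_I 0) one_ne_zero
  convert (((h2.pow 2).add (h3.pow 2)).add (h4.pow 2)).const_mul 4 using 1
  · ext t
    simp only [phi01, Pi.div_apply]
  congr 1
  have hy : cexp (2 * π * I * z) = cexp (π * I * z) ^ 2 := by
    rw [← Complex.exp_nat_mul]; ring_nf
  rw [Complex.exp_neg, hy]
  field_simp
  ring

/-- The q⁰-coefficient of φ_{0,1}³ is y⁻³ + 30y⁻² + 303y⁻¹ + 1060 + 303y + 30y² + y³. -/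
theorem phi01_cube_q0_coefficient (z : ℂ) :
    Filter.Tendsto (fun t : ℝ => phi01 ((t : ℂ) * Complex.I) z ^ 3) Filter.atTop
      (nhds ((Complex.exp (2 * Real.pi * Complex.I * z))⁻¹ ^ 3 +
        30 * (Complex.exp (2 * Real.pi * Complex.I * z))⁻¹ ^ 2 +
        303 * (Complex.exp (2 * Real.pi * Complex.I * z))⁻¹ + 1060 +
        303 * Complex.exp (2 * Real.pi * Complex.I * z) +
        30 * Complex.exp (2 * Real.pi * Complex.I * z) ^ 2 +
        Complex.exp (2 * Real.pi * Complex.I * z) ^ 3)) := by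
  convert (tendsto_phi01_mul_I z).pow 3 using 2
  have hy : cexp (2 * π * I * z) ≠ 0 := Complex.exp_ne_zero _
  field_simp
  ring
end

section
/- For every z ∈ ℂ, with y = e^{2πiz}, the function E₆(it)·φ_{−2,1}(it, z)³ tends to y⁻³ − 6y⁻² + 15y⁻¹ − 20 + 15y − 6y² + y³ as the real parameter t tends to +∞. -/
open Complex Filter Topology

/-!
As `t → ∞` the nome `q = e^{-2πt}` tends to `0`, so `E₆(it) → 1` and `∏ (1 - qⁿ) → 1` by dominated
convergence. In terms of Mathlib's `ϑ = jacobiTheta₂` one has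
`θ₁(τ, z) = -i q^{1/8} y^{1/2} ϑ(z + 1/2 + τ/2, τ)`, so the factors `q^{1/4}` of `θ₁²` and `η⁶`
cancel and `φ_{-2,1}(τ, z) = y ϑ(z + 1/2 + τ/2, τ)² / ∏ (1 - qⁿ)⁶`. The `n`-th term of
`ϑ(w + τ/2, τ)` is `e^{2πinw} q^{n(n+1)/2}`; since `n(n+1) ≥ 0` these terms are dominated by
their values at `τ = i`, and only `n = 0, -1` survive the limit, so
`ϑ(z + 1/2 + τ/2, τ) → 1 - y⁻¹`. Hence `φ_{-2,1} → (y - 1)²/y`, and the right-hand side is the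
binomial expansion of `(y - 1)⁶/y³`.
-/

open scoped Real ArithmeticFunction.sigma

section QSeries

variable {𝕜 : Type*} [NormedField 𝕜] [CompleteSpace 𝕜]

theorem tendsto_tsum_mul_pow_succ_nhds_zero {a : ℕ → 𝕜} {r : ℝ} (hr : 0 < r)
    (ha : Summable fun n ↦ ‖a n‖ * r ^ (n + 1)) :
    Tendsto (fun q : 𝕜 ↦ ∑' n, a n * q ^ (n + 1)) (𝓝 0) (𝓝 0) := by
  have hlim (n : ℕ) : Tendsto (fun q : 𝕜 ↦ a n * q ^ (n + 1)) (𝓝 0) (𝓝 0) := by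
    simpa using ((continuous_pow (n + 1)).tendsto (0 : 𝕜)).const_mul (a n)
  have hbound : ∀ᶠ q : 𝕜 in 𝓝 0, ∀ n, ‖a n * q ^ (n + 1)‖ ≤ ‖a n‖ * r ^ (n + 1) := by
    filter_upwards [Metric.closedBall_mem_nhds (0 : 𝕜) hr] with q hq n
    rw [norm_mul, norm_pow]
    gcongr
    simpa using hq
  simpa using tendsto_tsum_of_dominated_convergence ha hlim hbound

theorem tendsto_tprod_one_sub_pow_succ_nhds_zero :
    Tendsto (fun q : 𝕜 ↦ ∏' n : ℕ, (1 - q ^ (n + 1))) (𝓝 0) (𝓝 1) := by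
  have hlim (n : ℕ) : Tendsto (fun q : 𝕜 ↦ -q ^ (n + 1)) (𝓝 0) (𝓝 0) := by
    simpa using ((continuous_pow (n + 1)).tendsto (0 : 𝕜)).neg
  have hbound : ∀ᶠ q : 𝕜 in 𝓝 0, ∀ n : ℕ, ‖-q ^ (n + 1)‖ ≤ (1 / 2 : ℝ) ^ (n + 1) := by
    filter_upwards [Metric.closedBall_mem_nhds (0 : 𝕜) one_half_pos] with q hq n
    rw [norm_neg, norm_pow]
    gcongr
    simpa using hq
  have hsum : Summable fun n : ℕ ↦ (1 / 2 : ℝ) ^ (n + 1) :=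
    (summable_nat_add_iff 1).2 (summable_geometric_of_lt_one (by norm_num) (by norm_num))
  simpa [sub_eq_add_neg] using tendsto_tprod_one_add_of_dominated_convergence hsum hlim hbound

end QSeries

theorem summable_sigma_mul_pow (k : ℕ) {r : ℝ} (hr₀ : 0 ≤ r) (hr₁ : r < 1) :
    Summable fun n ↦ (σ k n : ℝ) * r ^ n := by
  refine (summable_pow_mul_geometric_of_norm_lt_one (k + 1) (by rwa [Real.norm_of_nonneg hr₀]))
    |>.of_nonneg_of_le (fun n ↦ by positivity) fun n ↦ ?_
  gcongr
  exact_mod_cast ArithmeticFunction.sigma_le_pow_succ k n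

theorem tendsto_cexp_mul_I_mul_comap_im {c : ℝ} (hc : 0 < c) :
    Tendsto (fun τ : ℂ ↦ cexp (c * I * τ)) (comap im atTop) (𝓝 0) := by
  rw [tendsto_zero_iff_norm_tendsto_zero]
  have hnorm (τ : ℂ) : ‖cexp (c * I * τ)‖ = Real.exp (-(c * τ.im)) := by
    rw [norm_exp]
    simp
  simp_rw [hnorm]
  exact Real.tendsto_exp_atBot.comp
    (tendsto_neg_atTop_atBot.comp (tendsto_comap.const_mul_atTop hc))

theorem tendsto_ofReal_mul_I_comap_im : Tendsto (fun t : ℝ ↦ (t : ℂ) * I) atTop (comap im atTop) :=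
  tendsto_comap_iff.2 (tendsto_id.congr fun t ↦ by simp)

theorem tendsto_cexp_two_pi_I_mul_comap_im :
    Tendsto (fun τ : ℂ ↦ cexp (2 * π * I * τ)) (comap im atTop) (𝓝 0) := by
  simpa using tendsto_cexp_mul_I_mul_comap_im (c := 2 * π) (by positivity)

theorem cexp_two_pi_I_mul_succ_mul (n : ℕ) (τ : ℂ) :
    cexp (2 * π * I * ((n : ℂ) + 1) * τ) = cexp (2 * π * I * τ) ^ (n + 1) := by
  rw [← Complex.exp_nat_mul]
  push_cast
  ring_nf

theorem tendsto_E6_comap_im : Tendsto E6 (comap im atTop) (𝓝 1) := by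
  have hσ : Summable fun n ↦ ‖(σ 5 (n + 1) : ℂ)‖ * (1 / 2 : ℝ) ^ (n + 1) := by
    simpa using (summable_nat_add_iff 1).2
      (summable_sigma_mul_pow 5 (r := 1 / 2) (by norm_num) (by norm_num))
  have hS := (tendsto_tsum_mul_pow_succ_nhds_zero one_half_pos hσ).comp
    tendsto_cexp_two_pi_I_mul_comap_im
  have hE6 : E6 = fun τ ↦
      1 - 504 * ∑' n : ℕ, (σ 5 (n + 1) : ℂ) * cexp (2 * π * I * τ) ^ (n + 1) := by
    ext τ
    simp [E6, cexp_two_pi_I_mul_succ_mul, ArithmeticFunction.sigma_apply]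
  simpa [hE6] using (hS.const_mul 504).const_sub 1

theorem tendsto_tprod_one_sub_cexp_comap_im :
    Tendsto (fun τ : ℂ ↦ ∏' n : ℕ, (1 - cexp (2 * π * I * ((n : ℂ) + 1) * τ)))
      (comap im atTop) (𝓝 1) := by
  simpa [Function.comp_def, cexp_two_pi_I_mul_succ_mul] using
    tendsto_tprod_one_sub_pow_succ_nhds_zero.comp tendsto_cexp_two_pi_I_mul_comap_im

theorem Int.mul_add_one_nonneg (n : ℤ) : 0 ≤ n * (n + 1) := by
  rcases le_or_gt 0 n with h | h <;> nlinarith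

theorem jacobiTheta₂_term_add_half_self (n : ℤ) (z τ : ℂ) :
    jacobiTheta₂_term n (z + τ / 2) τ =
      cexp (2 * π * I * n * z) * cexp (π * (n * (n + 1) : ℤ) * I * τ) := by
  rw [jacobiTheta₂_term, ← Complex.exp_add]
  push_cast
  ring_nf

theorem tendsto_jacobiTheta₂_add_half_self (z : ℂ) :
    Tendsto (fun τ ↦ jacobiTheta₂ (z + τ / 2) τ) (comap im atTop)
      (𝓝 (1 + (cexp (2 * π * I * z))⁻¹)) := by
  set g : ℤ → ℂ := fun n ↦ if n * (n + 1) = 0 then cexp (2 * π * I * n * z) else 0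
  have hg : ∑' n, g n = 1 + (cexp (2 * π * I * z))⁻¹ := by
    rw [tsum_eq_sum (s := {0, -1}) fun n hn ↦ ?_]
    · simp [g, ← Complex.exp_neg]
    · simp only [Finset.mem_insert, Finset.mem_singleton, not_or] at hn
      simp only [g, mul_eq_zero, if_neg (by omega : ¬(n = 0 ∨ n + 1 = 0))]
  have hlim (n : ℤ) :
      Tendsto (fun τ ↦ jacobiTheta₂_term n (z + τ / 2) τ) (comap im atTop) (𝓝 (g n)) := by
    simp only [jacobiTheta₂_term_add_half_self, g]
    split_ifs with hn
    · simpa [hn] using tendsto_const_nhds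
    · have hpos : 0 < π * (n * (n + 1) : ℤ) := by
        have : 0 < n * (n + 1) := (Int.mul_add_one_nonneg n).lt_of_ne' hn
        positivity
      simpa using (tendsto_cexp_mul_I_mul_comap_im hpos).const_mul (cexp (2 * π * I * n * z))
  have hbound : ∀ᶠ τ in comap im atTop, ∀ n : ℤ,
      ‖jacobiTheta₂_term n (z + τ / 2) τ‖ ≤ ‖jacobiTheta₂_term n (z + I / 2) I‖ := by
    filter_upwards [preimage_mem_comap (Ici_mem_atTop 1)] with τ (hτ : 1 ≤ τ.im) n
    rw [norm_jacobiTheta₂_term, norm_jacobiTheta₂_term, Real.exp_le_exp]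
    have hn : (0 : ℝ) ≤ n * (n + 1) := by exact_mod_cast Int.mul_add_one_nonneg n
    have : 0 ≤ π * (n * (n + 1)) * (τ.im - 1) :=
      mul_nonneg (mul_nonneg Real.pi_pos.le hn) (sub_nonneg.2 hτ)
    simp only [add_im, div_ofNat_im, I_im]
    linarith
  have hsum := ((summable_jacobiTheta₂_term_iff (z + I / 2) I).2 (by simp)).norm
  exact hg ▸ tendsto_tsum_of_dominated_convergence hsum hlim hbound

theorem theta1_eq_jacobiTheta₂ (τ z : ℂ) :
    theta1 τ z = -I * cexp (π * I * τ / 4 + π * I * z) * jacobiTheta₂ (z + 1 / 2 + τ / 2) τ := by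
  rw [theta1, jacobiTheta₂, mul_assoc (-I)]
  congr 1
  rw [← tsum_mul_left]
  refine tsum_congr fun n ↦ ?_
  rw [jacobiTheta₂_term, ← Complex.exp_pi_mul_I, ← Complex.exp_int_mul, ← Complex.exp_add,
    ← Complex.exp_add, ← Complex.exp_add]
  ring_nf

theorem phim21_eq_jacobiTheta₂ (τ z : ℂ) :
    phim21 τ z = cexp (2 * π * I * z) * jacobiTheta₂ (z + 1 / 2 + τ / 2) τ ^ 2 /
      (∏' n : ℕ, (1 - cexp (2 * π * I * ((n : ℂ) + 1) * τ))) ^ 6 := by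
  have hθ : cexp (π * I * τ / 4 + π * I * z) ^ 2 = cexp (π * I * τ / 2) * cexp (2 * π * I * z) := by
    rw [← Complex.exp_nat_mul, ← Complex.exp_add]
    ring_nf
  have hη : cexp (π * I * τ / 12) ^ 6 = cexp (π * I * τ / 2) := by
    rw [← Complex.exp_nat_mul]
    ring_nf
  rw [phim21, dedekindEta, theta1_eq_jacobiTheta₂, mul_pow, mul_pow, mul_pow, hθ, hη, neg_sq, I_sq]
  field_simp

theorem tendsto_phim21_comap_im (z : ℂ) :
    Tendsto (fun τ ↦ phim21 τ z) (comap im atTop)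
      (𝓝 (cexp (2 * π * I * z) * (1 - (cexp (2 * π * I * z))⁻¹) ^ 2)) := by
  have hshift : cexp (2 * π * I * (z + 1 / 2)) = -cexp (2 * π * I * z) := by
    rw [show 2 * π * I * (z + 1 / 2) = 2 * π * I * z + π * I by ring, Complex.exp_add,
      Complex.exp_pi_mul_I, mul_neg_one]
  have hθ := tendsto_jacobiTheta₂_add_half_self (z + 1 / 2)
  rw [hshift, inv_neg, ← sub_eq_add_neg] at hθ
  simp_rw [phim21_eq_jacobiTheta₂]
  have h := ((tendsto_const_nhds (x := cexp (2 * π * I * z))).mul (hθ.pow 2)).div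
    (tendsto_tprod_one_sub_cexp_comap_im.pow 6) (by norm_num)
  rwa [one_pow, div_one] at h

/-- The q⁰-coefficient of E₆·φ_{-2,1}³ is y⁻³ - 6y⁻² + 15y⁻¹ - 20 + 15y - 6y² + y³. -/
theorem E6_phim21_cube_q0_coefficient (z : ℂ) :
    Filter.Tendsto
      (fun t : ℝ => E6 ((t : ℂ) * Complex.I) * phim21 ((t : ℂ) * Complex.I) z ^ 3)
      Filter.atTop
      (nhds ((Complex.exp (2 * Real.pi * Complex.I * z))⁻¹ ^ 3 -
        6 * (Complex.exp (2 * Real.pi * Complex.I * z))⁻¹ ^ 2 +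
        15 * (Complex.exp (2 * Real.pi * Complex.I * z))⁻¹ - 20 +
        15 * Complex.exp (2 * Real.pi * Complex.I * z) -
        6 * Complex.exp (2 * Real.pi * Complex.I * z) ^ 2 +
        Complex.exp (2 * Real.pi * Complex.I * z) ^ 3)) := by
  have h := (tendsto_E6_comap_im.mul ((tendsto_phim21_comap_im z).pow 3)).comp
    tendsto_ofReal_mul_I_comap_im
  convert h using 2
  · rfl
  · field_simp
    ring
end
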